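/- Suppose N ≥ 2 and all weights equal 1, and assume the fixed-point attempt probabilities τ̂(q) and τ(j;p_0) lie in (0,1) for all reset distributions q and all parameters (j, p_0). Then the supremum of the throughput over all exponential-backoff reset distributions equals the maximum over the RandomReset family and is attained: sup_q S(τ̂(q), 1) = max_{j ∈ {0,…,m−1}, p_0 ∈ [0,1]} S(τ(j;p_0), 1). In particular, an optimal exponential-backoff policy can be realized as a RandomReset(j;p_0) policy. -/

import Mathlib

open Finset

/-- `α_j(c) = (1-c) ∑_{i=j}^m 2^i c^{i-j} + 2^m c^{m-j}`. -/
noncomputable def alphaB (m j : ℕ) (c : ℝ) : ℝ :=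
  (1 - c) * ∑ i ∈ Finset.Icc j m, (2 : ℝ) ^ i * c ^ (i - j) + (2 : ℝ) ^ m * c ^ (m - j)

/-- `κ_0 = 2 / CW_min`. -/
noncomputable def kappa0 (CWmin : ℕ) : ℝ := 2 / (CWmin : ℝ)

/-- A reset distribution `q = (q_0, …, q_m)`. -/
def IsResetDist (m : ℕ) (q : Fin (m + 1) → ℝ) : Prop :=
  (∀ j, 0 ≤ q j) ∧ (∑ j, q j) = 1

/-- Conditional attempt probability `τ̂_c(q) = κ_0 / ∑_j q_j α_j(c)`. -/
noncomputable def tauHatC (m CWmin : ℕ) (q : Fin (m + 1) → ℝ) (c : ℝ) : ℝ :=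
  kappa0 CWmin / ∑ j : Fin (m + 1), q j * alphaB m (j : ℕ) c

/-- RandomReset(j; p₀) conditional attempt probability
`τ_c(j;p₀) = κ_0 / (p₀ α_j(c) + ((1-p₀)/(m-j)) ∑_{i=j+1}^m α_i(c))`. -/
noncomputable def tauRRC (m CWmin : ℕ) (j : ℕ) (p0 c : ℝ) : ℝ :=
  kappa0 CWmin /
    (p0 * alphaB m j c + ((1 - p0) / ((m : ℝ) - (j : ℝ))) * ∑ i ∈ Finset.Icc (j + 1) m, alphaB m i c)

/-- `τ ∈ [0,1]` is the fixed-point attempt probability `τ̂(q)` of the reset distribution `q`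
for `N` nodes: `τ = τ̂_{1-(1-τ)^(N-1)}(q)`. -/
def IsFixedPointQ (m CWmin N : ℕ) (q : Fin (m + 1) → ℝ) (τ : ℝ) : Prop :=
  τ ∈ Set.Icc (0 : ℝ) 1 ∧ τ = tauHatC m CWmin q (1 - (1 - τ) ^ (N - 1))

/-- `τ ∈ [0,1]` is the fixed-point attempt probability `τ(j;p₀)` of the RandomReset(j;p₀)
policy for `N` nodes: `τ = τ_{1-(1-τ)^(N-1)}(j;p₀)`. -/
def IsFixedPointRR (m CWmin N : ℕ) (j : ℕ) (p0 τ : ℝ) : Prop :=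
  τ ∈ Set.Icc (0 : ℝ) 1 ∧ τ = tauRRC m CWmin j p0 (1 - (1 - τ) ^ (N - 1))

/-- System throughput with unit weights: `S(p, 1)` with `P_I = (1-p)^N`, `P_T = N p/(1-p)`. -/
noncomputable def Ssys1 (N : ℕ) (EP σ Ts Tc p : ℝ) : ℝ :=
  EP * ((N : ℝ) * p / (1 - p)) * (1 - p) ^ N /
    ((1 - p) ^ N * σ + ((N : ℝ) * p / (1 - p)) * (1 - p) ^ N * (Ts - Tc)
      + (1 - (1 - p) ^ N) * Tc)

/-!
Write `c(τ) = 1 - (1 - τ) ^ (N - 1)` (`collisionProb`) and `φ_j(τ) = τ α_j(c(τ))` (`stageLoad`).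
Clearing the denominator, `τ` is the fixed point of a reset distribution `q` iff
`∑ q_j φ_j(τ) = κ₀`. Each `φ_j` is strictly increasing on `[0, 1]`, so fixed points are unique,
and `φ_j` is increasing in `j`, so every fixed point lies in the compact set
`T = {τ ∈ [0, 1] | φ_0(τ) ≤ κ₀ ≤ φ_m(τ)}` (`feasibleSet`), which avoids `0` and `1`.
Conversely every `τ ∈ T` is a RandomReset fixed point: `κ₀ / τ ∈ [α_0(c), α_m(c)]`, and every
such value is a RandomReset average `p₀ α_j(c) + (1 - p₀) mean(α_{j+1}(c), …, α_m(c))`.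
The throughput is continuous on `T`, so it has a maximizer there, realised by a RandomReset policy.
-/

lemma alphaB_self (m : ℕ) (c : ℝ) : alphaB m m c = 2 ^ m * (2 - c) := by
  simp only [alphaB, Icc_self, sum_singleton, tsub_self, pow_zero, mul_one]
  ring

lemma alphaB_one (m j : ℕ) : alphaB m j 1 = 2 ^ m := by
  simp [alphaB]

lemma alphaB_of_lt {m j : ℕ} (hj : j < m) (c : ℝ) :
    alphaB m j c = (1 - c) * 2 ^ j + c * alphaB m (j + 1) c := by
  have hsum : ∑ i ∈ Icc j m, (2 : ℝ) ^ i * c ^ (i - j)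
      = 2 ^ j + c * ∑ i ∈ Icc (j + 1) m, (2 : ℝ) ^ i * c ^ (i - (j + 1)) := by
    rw [← insert_Icc_add_one_left_eq_Icc hj.le, sum_insert (by simp), mul_sum, Nat.sub_self,
      pow_zero, mul_one]
    congr 1
    refine sum_congr rfl fun i hi => ?_
    rw [show i - j = i - (j + 1) + 1 by grind, pow_succ]
    ring
  rw [alphaB, alphaB, hsum, show m - j = m - (j + 1) + 1 by omega, pow_succ]
  ring

lemma continuous_alphaB (m j : ℕ) : Continuous (alphaB m j) := by
  unfold alphaB
  fun_prop

section alphaB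

variable {m : ℕ} {c : ℝ}

lemma two_pow_le_alphaB (hc : c ∈ Set.Icc (0 : ℝ) 1) {j : ℕ} (hj : j ≤ m) :
    (2 : ℝ) ^ j ≤ alphaB m j c := by
  induction hj using Nat.decreasingInduction with
  | self => rw [alphaB_self]; nlinarith [hc.2, pow_pos (two_pos (α := ℝ)) m]
  | of_succ j hj ih =>
    rw [alphaB_of_lt hj]
    rw [pow_succ] at ih
    nlinarith [hc.1, hc.2, pow_pos (two_pos (α := ℝ)) j]

lemma monotoneOn_alphaB (hc : c ∈ Set.Icc (0 : ℝ) 1) :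
    MonotoneOn (fun j => alphaB m j c) (Set.Iic m) := by
  refine monotoneOn_of_le_add_one Set.ordConnected_Iic fun j _ _ hj => ?_
  have hj : j < m := hj
  have h := two_pow_le_alphaB (j := j + 1) hc hj
  rw [pow_succ] at h
  rw [alphaB_of_lt hj]
  nlinarith [hc.1, hc.2, pow_pos (two_pos (α := ℝ)) j]

end alphaB

lemma one_add_pow_sub_mul_pow_pos (k : ℕ) {τ : ℝ} (h0 : 0 < τ) (h1 : τ < 1) :
    0 < 1 + (1 - τ) ^ k - k * τ * (1 - τ) ^ (k - 1) := by
  cases k with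
  | zero => norm_num
  | succ k =>
    have hpos : 0 < (1 - τ) ^ k := pow_pos (by linarith) k
    have hbern : (1 - τ) ^ k * (1 + k * τ) ≤ 1 :=
      calc (1 - τ) ^ k * (1 + k * τ) ≤ (1 - τ) ^ k * (1 + τ) ^ k := by
            gcongr; exact one_add_mul_le_pow (by linarith) k
        _ = (1 - τ ^ 2) ^ k := by rw [← mul_pow]; ring
        _ ≤ 1 := pow_le_one₀ (by nlinarith) (by nlinarith)
    rw [Nat.add_sub_cancel, pow_succ]
    push_cast
    nlinarith

lemma strictMonoOn_mul_one_add_one_sub_pow (k : ℕ) :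
    StrictMonoOn (fun τ : ℝ => τ * (1 + (1 - τ) ^ k)) (Set.Icc 0 1) := by
  refine strictMonoOn_of_deriv_pos (convex_Icc 0 1) (by fun_prop) fun τ hτ => ?_
  rw [interior_Icc] at hτ
  have hd : HasDerivAt (fun τ : ℝ => τ * (1 + (1 - τ) ^ k))
      (1 + (1 - τ) ^ k - k * τ * (1 - τ) ^ (k - 1)) τ :=
    ((hasDerivAt_id' τ).fun_mul ((((hasDerivAt_id' τ).const_sub 1).fun_pow k).const_add 1)
      ).congr_deriv (by ring)
  rw [hd.deriv]
  exact one_add_pow_sub_mul_pow_pos k hτ.1 hτ.2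

noncomputable def collisionProb (N : ℕ) (τ : ℝ) : ℝ := 1 - (1 - τ) ^ (N - 1)

lemma collisionProb_mem_Icc (N : ℕ) {τ : ℝ} (hτ : τ ∈ Set.Icc (0 : ℝ) 1) :
    collisionProb N τ ∈ Set.Icc (0 : ℝ) 1 := by
  have h0 : 0 ≤ (1 - τ) ^ (N - 1) := pow_nonneg (by linarith [hτ.2]) _
  have h1 : (1 - τ) ^ (N - 1) ≤ 1 := pow_le_one₀ (by linarith [hτ.2]) (by linarith [hτ.1])
  exact ⟨by unfold collisionProb; linarith, by unfold collisionProb; linarith⟩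

lemma collisionProb_one {N : ℕ} (hN : 2 ≤ N) : collisionProb N 1 = 1 := by
  simp [collisionProb, zero_pow (by omega : N - 1 ≠ 0)]

noncomputable def stageLoad (m N j : ℕ) (τ : ℝ) : ℝ := τ * alphaB m j (collisionProb N τ)

lemma continuous_stageLoad (m N j : ℕ) : Continuous (stageLoad m N j) := by
  unfold stageLoad collisionProb
  have := continuous_alphaB m j
  fun_prop

lemma stageLoad_self (m N : ℕ) (τ : ℝ) :
    stageLoad m N m τ = 2 ^ m * (τ * (1 + (1 - τ) ^ (N - 1))) := by
  rw [stageLoad, alphaB_self, collisionProb]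
  ring

lemma stageLoad_of_lt {m j : ℕ} (hj : j < m) (N : ℕ) (τ : ℝ) :
    stageLoad m N j τ
      = 2 ^ j * (τ * (1 - τ) ^ (N - 1)) + collisionProb N τ * stageLoad m N (j + 1) τ := by
  rw [stageLoad, stageLoad, alphaB_of_lt hj, collisionProb]
  ring

section stageLoad

variable {m N : ℕ}

lemma two_pow_mul_le_stageLoad {j : ℕ} (hj : j ≤ m) {τ : ℝ} (hτ : τ ∈ Set.Icc (0 : ℝ) 1) :
    2 ^ j * τ ≤ stageLoad m N j τ := by
  rw [stageLoad, mul_comm τ]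
  exact mul_le_mul_of_nonneg_right (two_pow_le_alphaB (collisionProb_mem_Icc N hτ) hj) hτ.1

lemma stageLoad_mono {τ : ℝ} (hτ : τ ∈ Set.Icc (0 : ℝ) 1) {i j : ℕ} (hij : i ≤ j) (hj : j ≤ m) :
    stageLoad m N i τ ≤ stageLoad m N j τ :=
  mul_le_mul_of_nonneg_left
    (monotoneOn_alphaB (collisionProb_mem_Icc N hτ) (hij.trans hj) hj hij) hτ.1

/-- For the step `j → j + 1`, with `u = (1 - τ) ^ (N - 1)` and `s = stageLoad (j + 1)`,
`stageLoad j τ' - stageLoad j τ`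
`  = (2^j u' (τ' - τ) + (1 - u') (s τ' - s τ)) + 2^j τ (u - u') + (u - u') (s τ - 2^(j+1) τ)`,
a positive term plus two nonnegative ones. -/
lemma strictMonoOn_stageLoad {j : ℕ} (hj : j ≤ m) :
    StrictMonoOn (stageLoad m N j) (Set.Icc 0 1) := by
  induction hj using Nat.decreasingInduction with
  | self =>
    rw [show stageLoad m N m = _ from funext (stageLoad_self m N)]
    exact (strictMono_mul_left_of_pos (pow_pos two_pos m)).comp_strictMonoOn
      (strictMonoOn_mul_one_add_one_sub_pow (N - 1))
  | of_succ j hj ih =>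
    intro x hx y hy hxy
    rw [stageLoad_of_lt hj, stageLoad_of_lt hj, collisionProb, collisionProb]
    have hs := two_pow_mul_le_stageLoad (N := N) (j := j + 1) hj hx
    have hΔ := ih hx hy hxy
    have hu : (1 - y) ^ (N - 1) ≤ (1 - x) ^ (N - 1) :=
      pow_le_pow_left₀ (by linarith [hy.2]) (by linarith) _
    have hu'0 : 0 ≤ (1 - y) ^ (N - 1) := pow_nonneg (by linarith [hy.2]) _
    have hu'1 : (1 - y) ^ (N - 1) ≤ 1 := pow_le_one₀ (by linarith [hy.2]) (by linarith [hy.1])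
    have h2j : (0 : ℝ) < 2 ^ j := pow_pos two_pos j
    rw [pow_succ] at hs
    have hpos : 0 < 2 ^ j * ((1 - y) ^ (N - 1) * (y - x))
        + (1 - (1 - y) ^ (N - 1)) * (stageLoad m N (j + 1) y - stageLoad m N (j + 1) x) := by
      rcases hu'1.lt_or_eq with hlt | heq
      · have := mul_pos (sub_pos.2 hlt) (sub_pos.2 hΔ)
        positivity
      · rw [heq]
        nlinarith
    nlinarith [mul_nonneg (sub_nonneg.2 hu) (sub_nonneg.2 hs), mul_nonneg h2j.le
      (mul_nonneg hx.1 (sub_nonneg.2 hu))]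

end stageLoad

noncomputable def resetLoad (m N : ℕ) (q : Fin (m + 1) → ℝ) (τ : ℝ) : ℝ :=
  ∑ j : Fin (m + 1), q j * stageLoad m N j τ

section resetLoad

variable {m N CWmin : ℕ} {q : Fin (m + 1) → ℝ}

lemma IsResetDist.exists_pos (hq : IsResetDist m q) : ∃ j, 0 < q j := by
  by_contra! h
  have := sum_nonpos fun j (_ : j ∈ univ) => h j
  linarith [hq.2]

lemma strictMonoOn_resetLoad (hq : IsResetDist m q) :
    StrictMonoOn (resetLoad m N q) (Set.Icc 0 1) := by
  intro x hx y hy hxy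
  obtain ⟨j, hj⟩ := hq.exists_pos
  refine sum_lt_sum (fun i _ => ?_) ⟨j, mem_univ _, ?_⟩
  · exact mul_le_mul_of_nonneg_left
      ((strictMonoOn_stageLoad (Nat.lt_succ_iff.1 i.2)).monotoneOn hx hy hxy.le) (hq.1 i)
  · exact mul_lt_mul_of_pos_left (strictMonoOn_stageLoad (Nat.lt_succ_iff.1 j.2) hx hy hxy) hj

lemma resetLoad_mem_Icc (hq : IsResetDist m q) {τ : ℝ} (hτ : τ ∈ Set.Icc (0 : ℝ) 1) :
    resetLoad m N q τ ∈ Set.Icc (stageLoad m N 0 τ) (stageLoad m N m τ) := by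
  have hconst (x : ℝ) : ∑ j : Fin (m + 1), q j * x = x := by rw [← sum_mul, hq.2, one_mul]
  constructor
  · rw [← hconst (stageLoad m N 0 τ)]
    exact sum_le_sum fun i _ => mul_le_mul_of_nonneg_left
      (stageLoad_mono hτ (Nat.zero_le _) (Nat.lt_succ_iff.1 i.2)) (hq.1 i)
  · rw [← hconst (stageLoad m N m τ)]
    exact sum_le_sum fun i _ => mul_le_mul_of_nonneg_left
      (stageLoad_mono hτ (Nat.lt_succ_iff.1 i.2) le_rfl) (hq.1 i)

lemma one_le_sum_mul_alphaB (hq : IsResetDist m q) {c : ℝ} (hc : c ∈ Set.Icc (0 : ℝ) 1) :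
    1 ≤ ∑ j : Fin (m + 1), q j * alphaB m j c :=
  hq.2.symm.le.trans <| sum_le_sum fun j _ => le_mul_of_one_le_right (hq.1 j)
    ((one_le_pow₀ one_le_two).trans (two_pow_le_alphaB hc (Nat.lt_succ_iff.1 j.2)))

lemma IsFixedPointQ.resetLoad_eq (hq : IsResetDist m q) {τ : ℝ}
    (h : IsFixedPointQ m CWmin N q τ) : resetLoad m N q τ = kappa0 CWmin := by
  have hpos := one_le_sum_mul_alphaB hq (collisionProb_mem_Icc N h.1)
  have hfix := h.2
  rw [tauHatC, eq_div_iff (by positivity)] at hfix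
  rw [← hfix, resetLoad, mul_sum]
  exact sum_congr rfl fun j _ => by rw [stageLoad, collisionProb]; ring

lemma IsFixedPointQ.eq (hq : IsResetDist m q) {τ₁ τ₂ : ℝ} (h₁ : IsFixedPointQ m CWmin N q τ₁)
    (h₂ : IsFixedPointQ m CWmin N q τ₂) : τ₁ = τ₂ :=
  (strictMonoOn_resetLoad hq).injOn h₁.1 h₂.1 ((h₁.resetLoad_eq hq).trans (h₂.resetLoad_eq hq).symm)

end resetLoad

def feasibleSet (m CWmin N : ℕ) : Set ℝ :=
  {τ ∈ Set.Icc (0 : ℝ) 1 | stageLoad m N 0 τ ≤ kappa0 CWmin ∧ kappa0 CWmin ≤ stageLoad m N m τ}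

section feasibleSet

variable {m CWmin N : ℕ}

lemma IsFixedPointQ.mem_feasibleSet {q : Fin (m + 1) → ℝ} (hq : IsResetDist m q) {τ : ℝ}
    (h : IsFixedPointQ m CWmin N q τ) : τ ∈ feasibleSet m CWmin N := by
  have hload := resetLoad_mem_Icc (N := N) hq h.1
  rw [h.resetLoad_eq hq] at hload
  exact ⟨h.1, hload⟩

lemma isCompact_feasibleSet (m CWmin N : ℕ) : IsCompact (feasibleSet m CWmin N) :=
  isCompact_Icc.of_isClosed_subset
    (isClosed_Icc.inter ((isClosed_le (continuous_stageLoad m N 0) continuous_const).inter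
      (isClosed_le continuous_const (continuous_stageLoad m N m))))
    fun _ h => h.1

lemma kappa0_mem_Ioo (hm : 1 ≤ m) (hCW : 2 ≤ CWmin) : kappa0 CWmin ∈ Set.Ioo (0 : ℝ) (2 ^ m) := by
  have hCW' : (2 : ℝ) ≤ CWmin := by exact_mod_cast hCW
  have h1 : kappa0 CWmin ≤ 1 := (div_le_one (by linarith)).2 hCW'
  have h2 : (2 : ℝ) ≤ 2 ^ m := le_self_pow₀ one_le_two (by omega)
  exact ⟨div_pos two_pos (by linarith), by linarith⟩

lemma feasibleSet_subset_Ioo (hN : 2 ≤ N) (hκ : kappa0 CWmin ∈ Set.Ioo (0 : ℝ) (2 ^ m)) :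
    feasibleSet m CWmin N ⊆ Set.Ioo 0 1 := by
  rintro τ ⟨hτ, hlo, hhi⟩
  refine ⟨hτ.1.lt_of_ne ?_, hτ.2.lt_of_ne ?_⟩
  · rintro rfl
    simp only [stageLoad, zero_mul] at hhi
    linarith [hκ.1]
  · rintro rfl
    rw [stageLoad, collisionProb_one hN, alphaB_one, one_mul] at hlo
    linarith [hκ.2]

end feasibleSet

noncomputable def rrDist (m j : ℕ) (p0 : ℝ) (i : Fin (m + 1)) : ℝ :=
  (if (i : ℕ) = j then p0 else 0) + if (i : ℕ) ∈ Icc (j + 1) m then (1 - p0) / ((m : ℝ) - j) else 0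

section rrDist

variable {m j : ℕ} {p0 : ℝ}

lemma sum_rrDist_mul (hj : j ≤ m) (f : ℕ → ℝ) :
    ∑ i : Fin (m + 1), rrDist m j p0 i * f i
      = p0 * f j + ((1 - p0) / ((m : ℝ) - j)) * ∑ i ∈ Icc (j + 1) m, f i := by
  have hrange : ∑ i : Fin (m + 1), rrDist m j p0 i * f i
      = ∑ i ∈ range (m + 1), ((if i = j then p0 * f i else 0)
          + if i ∈ Icc (j + 1) m then (1 - p0) / ((m : ℝ) - j) * f i else 0) := by
    rw [← Fin.sum_univ_eq_sum_range]
    simp only [rrDist, add_mul, ite_mul, zero_mul]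
  rw [hrange, sum_add_distrib, sum_ite_eq', if_pos (mem_range.2 (Nat.lt_succ_of_le hj)),
    sum_ite_mem, inter_eq_right.2 fun i hi => mem_range.2 (by grind), mul_sum]

lemma isResetDist_rrDist (hj : j < m) (hp0 : p0 ∈ Set.Icc (0 : ℝ) 1) :
    IsResetDist m (rrDist m j p0) := by
  have hmj : (0 : ℝ) < m - j := sub_pos.2 (by exact_mod_cast hj)
  refine ⟨fun i => add_nonneg ?_ ?_, ?_⟩
  · split_ifs <;> simp [hp0.1]
  · split_ifs <;> simp [div_nonneg (sub_nonneg.2 hp0.2) hmj.le]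
  · have h := sum_rrDist_mul (p0 := p0) hj.le fun _ => 1
    simp only [mul_one, sum_const, Nat.card_Icc, nsmul_eq_mul] at h
    rw [h, Nat.add_sub_add_right, Nat.cast_sub hj.le]
    field_simp
    ring

lemma tauRRC_eq_tauHatC_rrDist (CWmin : ℕ) (hj : j ≤ m) (c : ℝ) :
    tauRRC m CWmin j p0 c = tauHatC m CWmin (rrDist m j p0) c := by
  rw [tauRRC, tauHatC, sum_rrDist_mul hj fun i => alphaB m i c]

lemma isFixedPointRR_iff {CWmin N : ℕ} (hj : j ≤ m) {τ : ℝ} :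
    IsFixedPointRR m CWmin N j p0 τ ↔ IsFixedPointQ m CWmin N (rrDist m j p0) τ := by
  rw [IsFixedPointRR, IsFixedPointQ, tauRRC_eq_tauHatC_rrDist CWmin hj]

end rrDist

lemma exists_le_and_le_succ (a : ℕ → ℝ) {D : ℝ} {m : ℕ} (hm : 0 < m) (h0 : a 0 ≤ D)
    (hm' : D ≤ a m) : ∃ j < m, a j ≤ D ∧ D ≤ a (j + 1) := by
  induction m with
  | zero => omega
  | succ m ih =>
    by_cases hD : D ≤ a m
    · rcases m.eq_zero_or_pos with rfl | hm0
      · exact ⟨0, hm, h0, hm'⟩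
      · obtain ⟨j, hj, hjD⟩ := ih hm0 hD
        exact ⟨j, hj.trans (Nat.lt_succ_self m), hjD⟩
    · exact ⟨m, Nat.lt_succ_self m, (not_le.1 hD).le, hm'⟩

/-- With `a j ≤ D ≤ a (j + 1)`, the mean of `a (j + 1), …, a m` is at least `a (j + 1)`, so `D`
lies on the segment from `a j` to that mean. -/
lemma exists_randomReset_average_eq (a : ℕ → ℝ) {m : ℕ} (ha : MonotoneOn a (Set.Iic m))
    (hm : 0 < m) {D : ℝ} (h0 : a 0 ≤ D) (hm' : D ≤ a m) :
    ∃ j < m, ∃ p0 ∈ Set.Icc (0 : ℝ) 1,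
      p0 * a j + ((1 - p0) / ((m : ℝ) - j)) * ∑ i ∈ Icc (j + 1) m, a i = D := by
  obtain ⟨j, hj, hjD, hDj⟩ := exists_le_and_le_succ a hm h0 hm'
  have hmj : (0 : ℝ) < m - j := sub_pos.2 (by exact_mod_cast hj)
  have hcard : ((Icc (j + 1) m).card : ℝ) = m - j := by
    rw [Nat.card_Icc, Nat.add_sub_add_right, Nat.cast_sub hj.le]
  have hmean : a (j + 1) ≤ (∑ i ∈ Icc (j + 1) m, a i) / (m - j) := by
    rw [le_div_iff₀ hmj, ← hcard, mul_comm, ← nsmul_eq_mul]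
    exact card_nsmul_le_sum _ _ _ fun i hi => ha (Set.mem_Iic.2 (by omega))
      (Set.mem_Iic.2 (mem_Icc.1 hi).2) (mem_Icc.1 hi).1
  have hseg : D ∈ segment ℝ (a j) ((∑ i ∈ Icc (j + 1) m, a i) / (m - j)) := by
    rw [segment_eq_Icc (hjD.trans (hDj.trans hmean))]
    exact ⟨hjD, hDj.trans hmean⟩
  obtain ⟨p0, p1, hp0, hp1, hsum, hD⟩ := hseg
  refine ⟨j, hj, p0, ⟨hp0, by linarith⟩, ?_⟩
  rw [← hD, ← eq_sub_of_add_eq' hsum, smul_eq_mul, smul_eq_mul]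
  ring

lemma exists_isFixedPointRR {m CWmin N : ℕ} (hm : 0 < m) {τ : ℝ}
    (hτ : τ ∈ feasibleSet m CWmin N) (hτ0 : 0 < τ) :
    ∃ j < m, ∃ p0 ∈ Set.Icc (0 : ℝ) 1, IsFixedPointRR m CWmin N j p0 τ := by
  obtain ⟨hτ1, hlo, hhi⟩ := hτ
  have hc := collisionProb_mem_Icc N hτ1
  have hκ : 0 < kappa0 CWmin := by
    have := two_pow_mul_le_stageLoad (N := N) (m := m) (Nat.zero_le _) hτ1
    linarith
  rw [stageLoad, ← le_div_iff₀' hτ0] at hlo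
  rw [stageLoad, ← div_le_iff₀' hτ0] at hhi
  obtain ⟨j, hj, p0, hp0, hD⟩ :=
    exists_randomReset_average_eq (fun i => alphaB m i (collisionProb N τ)) (monotoneOn_alphaB hc)
      hm hlo hhi
  refine ⟨j, hj, p0, hp0, hτ1, ?_⟩
  rw [tauRRC, ← collisionProb, hD, div_div_cancel₀ hκ.ne']

lemma Ssys1_denom_pos (N : ℕ) {σ Ts Tc p : ℝ} (hσ : 0 < σ) (hTc : σ ≤ Tc) (hTs : Tc ≤ Ts)
    (hp : p ∈ Set.Ioo (0 : ℝ) 1) :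
    0 < (1 - p) ^ N * σ + ((N : ℝ) * p / (1 - p)) * (1 - p) ^ N * (Ts - Tc)
      + (1 - (1 - p) ^ N) * Tc := by
  have h1 : 0 < 1 - p := sub_pos.2 hp.2
  have h2 : (1 - p) ^ N ≤ 1 := pow_le_one₀ h1.le (by linarith [hp.1])
  have h3 : 0 ≤ (N : ℝ) * p / (1 - p) := by have := hp.1; positivity
  have := mul_nonneg (mul_nonneg h3 (pow_pos h1 N).le) (sub_nonneg.2 hTs)
  nlinarith [mul_pos (pow_pos h1 N) hσ]

lemma continuousOn_Ssys1 (N : ℕ) (EP : ℝ) {σ Ts Tc : ℝ} (hσ : 0 < σ) (hTc : σ ≤ Tc)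
    (hTs : Tc ≤ Ts) : ContinuousOn (Ssys1 N EP σ Ts Tc) (Set.Ioo (0 : ℝ) 1) := by
  have h1 : ∀ p ∈ Set.Ioo (0 : ℝ) 1, 1 - p ≠ 0 := fun p hp => (sub_pos.2 hp.2).ne'
  unfold Ssys1
  exact ContinuousOn.div (by fun_prop (disch := assumption)) (by fun_prop (disch := assumption))
    fun p hp => (Ssys1_denom_pos N hσ hTc hTs hp).ne'

theorem optimal_backoff_is_RandomReset_general (m CWmin N : ℕ) (hm : 1 ≤ m) (hCW : 2 ≤ CWmin)
    (hN : 2 ≤ N) (EP σ Ts Tc : ℝ)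
    (hσ : 0 < σ) (hTc : σ ≤ Tc) (hTs : Tc ≤ Ts)
    (Tq : (Fin (m + 1) → ℝ) → ℝ) (Trr : ℕ → ℝ → ℝ)
    (hTq : ∀ q : Fin (m + 1) → ℝ, IsResetDist m q →
      Tq q ∈ Set.Ioo (0 : ℝ) 1 ∧ IsFixedPointQ m CWmin N q (Tq q))
    (hTrr : ∀ j : ℕ, ∀ p0 ∈ Set.Icc (0 : ℝ) 1, j < m →
      Trr j p0 ∈ Set.Ioo (0 : ℝ) 1 ∧ IsFixedPointRR m CWmin N j p0 (Trr j p0)) :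
    ∃ j : ℕ, ∃ p0 : ℝ, j < m ∧ p0 ∈ Set.Icc (0 : ℝ) 1 ∧
      (∀ q : Fin (m + 1) → ℝ, IsResetDist m q →
        Ssys1 N EP σ Ts Tc (Tq q) ≤ Ssys1 N EP σ Ts Tc (Trr j p0)) ∧
      (∀ j' : ℕ, ∀ p0' ∈ Set.Icc (0 : ℝ) 1, j' < m →
        Ssys1 N EP σ Ts Tc (Trr j' p0') ≤ Ssys1 N EP σ Ts Tc (Trr j p0)) ∧
      sSup {x : ℝ | ∃ q : Fin (m + 1) → ℝ, IsResetDist m q ∧ x = Ssys1 N EP σ Ts Tc (Tq q)}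
        = Ssys1 N EP σ Ts Tc (Trr j p0) := by
  have hTq_mem (q) (hq : IsResetDist m q) : Tq q ∈ feasibleSet m CWmin N :=
    (hTq q hq).2.mem_feasibleSet hq
  have hTrr_mem (j) (p0) (hp0 : p0 ∈ Set.Icc (0 : ℝ) 1) (hj : j < m) :
      Trr j p0 ∈ feasibleSet m CWmin N :=
    ((isFixedPointRR_iff hj.le).1 (hTrr j p0 hp0 hj).2).mem_feasibleSet (isResetDist_rrDist hj hp0)
  have hIoo := feasibleSet_subset_Ioo hN (kappa0_mem_Ioo hm hCW)
  obtain ⟨τ, hτ, hmax⟩ := (isCompact_feasibleSet m CWmin N).exists_isMaxOn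
    ⟨_, hTrr_mem 0 1 ⟨zero_le_one, le_rfl⟩ hm⟩ ((continuousOn_Ssys1 N EP hσ hTc hTs).mono hIoo)
  obtain ⟨j, hj, p0, hp0, hfix⟩ := exists_isFixedPointRR hm hτ (hIoo hτ).1
  have hq := isResetDist_rrDist hj hp0
  rw [isFixedPointRR_iff hj.le] at hfix
  have hTrr_eq : Trr j p0 = τ := ((isFixedPointRR_iff hj.le).1 (hTrr j p0 hp0 hj).2).eq hq hfix
  have hTq_eq : Tq (rrDist m j p0) = τ := (hTq _ hq).2.eq hq hfix
  refine ⟨j, p0, hj, hp0, fun q hq => hTrr_eq ▸ hmax (hTq_mem q hq),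
    fun j' p0' hp0' hj' => hTrr_eq ▸ hmax (hTrr_mem j' p0' hp0' hj'), ?_⟩
  refine IsGreatest.csSup_eq ⟨⟨rrDist m j p0, hq, by rw [hTq_eq, hTrr_eq]⟩, ?_⟩
  rintro _ ⟨q, hq, rfl⟩
  exact hTrr_eq ▸ hmax (hTq_mem q hq)

/-- With unit weights, assuming the fixed-point attempt probabilities `τ̂(q)` (given by the
function `Tq`) and `τ(j;p₀)` (given by `Trr`) lie in `(0,1)`, the supremum of the
throughput over all exponential-backoff reset distributions is attained within the
RandomReset family: there are `j ∈ {0,…,m-1}` and `p₀ ∈ [0,1]` such that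
`S(τ(j;p₀), 1)` dominates `S(τ̂(q), 1)` for every reset distribution `q` and dominates
`S(τ(j';p₀'), 1)` for every RandomReset policy; hence
`sup_q S(τ̂(q),1) = max_{j,p₀} S(τ(j;p₀),1)`. -/
theorem optimal_backoff_is_RandomReset (m CWmin N : ℕ) (hm : 1 ≤ m) (hCW : 2 ≤ CWmin)
    (hN : 2 ≤ N) (EP σ Ts Tc : ℝ)
    (hEP : 0 < EP) (hσ : 0 < σ) (hTc : σ ≤ Tc) (hTs : Tc ≤ Ts)
    (Tq : (Fin (m + 1) → ℝ) → ℝ) (Trr : ℕ → ℝ → ℝ)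
    (hTq : ∀ q : Fin (m + 1) → ℝ, IsResetDist m q →
      Tq q ∈ Set.Ioo (0 : ℝ) 1 ∧ IsFixedPointQ m CWmin N q (Tq q))
    (hTrr : ∀ j : ℕ, ∀ p0 ∈ Set.Icc (0 : ℝ) 1, j < m →
      Trr j p0 ∈ Set.Ioo (0 : ℝ) 1 ∧ IsFixedPointRR m CWmin N j p0 (Trr j p0)) :
    ∃ j : ℕ, ∃ p0 : ℝ, j < m ∧ p0 ∈ Set.Icc (0 : ℝ) 1 ∧
      (∀ q : Fin (m + 1) → ℝ, IsResetDist m q →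
        Ssys1 N EP σ Ts Tc (Tq q) ≤ Ssys1 N EP σ Ts Tc (Trr j p0)) ∧
      (∀ j' : ℕ, ∀ p0' ∈ Set.Icc (0 : ℝ) 1, j' < m →
        Ssys1 N EP σ Ts Tc (Trr j' p0') ≤ Ssys1 N EP σ Ts Tc (Trr j p0)) ∧
      sSup {x : ℝ | ∃ q : Fin (m + 1) → ℝ, IsResetDist m q ∧ x = Ssys1 N EP σ Ts Tc (Tq q)}
        = Ssys1 N EP σ Ts Tc (Trr j p0) :=
  optimal_backoff_is_RandomReset_general m CWmin N hm hCW hN EP σ Ts Tc hσ hTc hTs Tq Trr hTq hTrr
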